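/- arXiv:2010.12701 — 6 statements merged into one kernel-verified Lean document; each statement's English description precedes it below -/
import Mathlib

section
/- Let t and u be weakly decreasing sequences of non-negative real numbers with finite p-norm for some 1 ≤ p ≤ ∞. If |t|_{p_j} = |u|_{p_j} for some sequence p_j → ∞ (with all norms finite), then t = u. -/
open Filter Real

private lemma aux1 (t u : ℕ → ℝ) (hu : Antitone u)
    (ht0 : ∀ k, 0 ≤ t k) (hu0 : ∀ k, 0 ≤ u k)
    (p0 : ℝ) (hp0 : 1 ≤ p0) (hup0 : Summable (fun k => u k ^ p0))
    (pj : ℕ → ℝ) (hpj1 : ∀ j, 1 ≤ pj j)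
    (hpj : Tendsto pj atTop atTop)
    (hsum : ∀ j, Summable (fun k => t k ^ pj j) ∧ Summable (fun k => u k ^ pj j))
    (hS : ∀ j, (∑' k, t k ^ pj j) = (∑' k, u k ^ pj j))
    (k : ℕ) (hpref : ∀ i < k, t i = u i) (hlt : u k < t k) : False := by
  have htk : 0 < t k := lt_of_le_of_lt (hu0 k) hlt
  set r : ℝ := u k / t k with hr
  have hr0 : 0 ≤ r := div_nonneg (hu0 k) htk.le
  have hr1 : r < 1 := (div_lt_one htk).2 hlt
  set C : ℝ := ∑' i, u (k + i) ^ p0 with hC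
  have hCsum : Summable (fun i => u (k + i) ^ p0) := by
    have := (summable_nat_add_iff k).2 hup0
    simpa [add_comm] using this
  -- the limit: C * r ^ (pj j - p0) → 0
  have hlim : Tendsto (fun j => C * r ^ (pj j - p0)) atTop (nhds 0) := by
    have h1 : Tendsto (fun x : ℝ => r ^ x) atTop (nhds 0) :=
      tendsto_rpow_atTop_of_base_lt_one r (by linarith) hr1
    have h2 : Tendsto (fun j => pj j - p0) atTop atTop :=
      tendsto_atTop_add_const_right _ (-p0) hpj
    have := (h1.comp h2).const_mul C
    simpa using this
  have hpos : 0 < t k ^ p0 := Real.rpow_pos_of_pos htk p0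
  have hev : ∀ᶠ j in atTop, C * r ^ (pj j - p0) < t k ^ p0 :=
    hlim.eventually_lt_const hpos
  have hev2 : ∀ᶠ j in atTop, p0 ≤ pj j := hpj.eventually_ge_atTop p0
  obtain ⟨j, hj1, hj2⟩ := (hev.and hev2).exists
  set p : ℝ := pj j with hp
  have hq0 : 0 ≤ p - p0 := by linarith
  -- split sums
  have hteq : (∑' i, t (k + i) ^ p) = ∑' i, u (k + i) ^ p := by
    have h1 := Summable.sum_add_tsum_nat_add k (hsum j).1
    have h2 := Summable.sum_add_tsum_nat_add k (hsum j).2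
    have hpre : (∑ i ∈ Finset.range k, t i ^ p) = ∑ i ∈ Finset.range k, u i ^ p := by
      apply Finset.sum_congr rfl
      intro i hi
      rw [hpref i (Finset.mem_range.1 hi)]
    have := hS j
    simp only [add_comm k] at h1 h2 ⊢
    linarith [h1, h2]
  -- lower bound on t tail
  have hlow : t k ^ p ≤ ∑' i, t (k + i) ^ p := by
    have hsum' : Summable (fun i => t (k + i) ^ p) := by
      have := (summable_nat_add_iff k).2 (hsum j).1
      simpa [add_comm] using this
    have := Summable.le_tsum hsum' 0 (fun i _ => Real.rpow_nonneg (ht0 _) p)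
    simpa using this
  -- upper bound on u tail
  have hup : (∑' i, u (k + i) ^ p) ≤ C * u k ^ (p - p0) := by
    have hsum' : Summable (fun i => u (k + i) ^ p) := by
      have := (summable_nat_add_iff k).2 (hsum j).2
      simpa [add_comm] using this
    have hptwise : ∀ i, u (k + i) ^ p ≤ u (k + i) ^ p0 * u k ^ (p - p0) := by
      intro i
      have hpne : p ≠ 0 := by have h1 : 1 ≤ p := hpj1 j; intro h; rw [h] at h1; linarith
      rcases eq_or_lt_of_le (hu0 (k + i)) with h0 | h0
      · rw [← h0, Real.zero_rpow hpne]
        exact mul_nonneg (Real.rpow_nonneg le_rfl _) (Real.rpow_nonneg (hu0 _) _)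
      · calc u (k + i) ^ p = u (k + i) ^ p0 * u (k + i) ^ (p - p0) := by
              rw [← Real.rpow_add h0]; ring_nf
          _ ≤ u (k + i) ^ p0 * u k ^ (p - p0) := by
              apply mul_le_mul_of_nonneg_left _ (Real.rpow_nonneg (hu0 _) p0)
              exact Real.rpow_le_rpow (hu0 _) (hu (Nat.le_add_right k i)) hq0
    calc (∑' i, u (k + i) ^ p) ≤ ∑' i, u (k + i) ^ p0 * u k ^ (p - p0) :=
          Summable.tsum_le_tsum hptwise hsum' (hCsum.mul_right _)
      _ = C * u k ^ (p - p0) := tsum_mul_right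
  -- combine
  have hukq : u k ^ (p - p0) = r ^ (p - p0) * t k ^ (p - p0) := by
    rw [← Real.mul_rpow hr0 htk.le, hr, div_mul_cancel₀ _ htk.ne']
  have htkp : t k ^ p = t k ^ p0 * t k ^ (p - p0) := by
    rw [← Real.rpow_add htk]; ring_nf
  have htkq : 0 < t k ^ (p - p0) := Real.rpow_pos_of_pos htk _
  have : C * u k ^ (p - p0) < t k ^ p := by
    rw [hukq, htkp, ← mul_assoc]
    exact mul_lt_mul_of_pos_right hj1 htkq
  linarith [hlow, hup, hteq.ge, hteq.le]

/-- A weakly decreasing non-negative sequence with finite p-norm is determined by its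
p_j-norms along any sequence p_j → ∞. -/
theorem stmt1 (t u : ℕ → ℝ) (ht : Antitone t) (hu : Antitone u)
    (ht0 : ∀ k, 0 ≤ t k) (hu0 : ∀ k, 0 ≤ u k)
    (hfin : ∃ p : ℝ, 1 ≤ p ∧ Summable (fun k => t k ^ p) ∧ Summable (fun k => u k ^ p))
    (pj : ℕ → ℝ) (hpj1 : ∀ j, 1 ≤ pj j)
    (hpj : Filter.Tendsto pj Filter.atTop Filter.atTop)
    (hsum : ∀ j, Summable (fun k => t k ^ pj j) ∧ Summable (fun k => u k ^ pj j))
    (heq : ∀ j, (∑' k, t k ^ pj j) ^ (1 / pj j) = (∑' k, u k ^ pj j) ^ (1 / pj j)) :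
    t = u := by
  obtain ⟨p0, hp0, htp0, hup0⟩ := hfin
  have hS : ∀ j, (∑' k, t k ^ pj j) = (∑' k, u k ^ pj j) := by
    intro j
    have hpne : pj j ≠ 0 := by have := hpj1 j; linarith
    have h1 : (0:ℝ) ≤ ∑' k, t k ^ pj j :=
      tsum_nonneg fun k => Real.rpow_nonneg (ht0 k) _
    have h2 : (0:ℝ) ≤ ∑' k, u k ^ pj j :=
      tsum_nonneg fun k => Real.rpow_nonneg (hu0 k) _
    have := congrArg (fun x : ℝ => x ^ pj j) (heq j)
    rwa [← Real.rpow_mul h1, ← Real.rpow_mul h2, one_div,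
      inv_mul_cancel₀ hpne, Real.rpow_one, Real.rpow_one] at this
  by_contra hne
  have hex : ∃ k, t k ≠ u k := by
    by_contra h
    push_neg at h
    exact hne (funext h)
  classical
  set k := Nat.find hex with hk
  have hkne : t k ≠ u k := Nat.find_spec hex
  have hpref : ∀ i < k, t i = u i := fun i hi => by
    by_contra h; exact Nat.find_min hex hi h
  rcases lt_or_gt_of_ne hkne with h | h
  · exact absurd (aux1 u t ht hu0 ht0 p0 hp0 htp0 pj hpj1 hpj
      (fun j => (hsum j).symm) (fun j => (hS j).symm) k
      (fun i hi => (hpref i hi).symm) h) id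
  · exact absurd (aux1 t u hu ht0 hu0 p0 hp0 hup0 pj hpj1 hpj
      hsum hS k hpref h) id
end

section
/- Suppose t^{(N)} is a sequence of weakly decreasing sequences of non-negative reals with |t^{(N)}|_2² ≤ M for all N, converging pointwise (coordinatewise) to a sequence t. Then |t|_2² ≤ M and for all integers d ≥ 2, lim_{N→∞} |t^{(N)}|_{2d} = |t|_{2d}. -/
/-- Pointwise convergence of weakly decreasing non-negative sequences with uniformly bounded
2-norms implies convergence of all 2d-norms (d ≥ 2) to the 2d-norms of the limit, and the limit
has 2-norm squared at most M. -/
theorem stmt3 (t : ℕ → ℕ → ℝ) (tl : ℕ → ℝ) (M : ℝ)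
    (hanti : ∀ N, Antitone (t N)) (hpos : ∀ N k, 0 ≤ t N k)
    (hsum : ∀ N, Summable (fun k => t N k ^ 2)) (hM : ∀ N, (∑' k, t N k ^ 2) ≤ M)
    (hanti' : Antitone tl) (hpos' : ∀ k, 0 ≤ tl k)
    (hlim : ∀ k, Filter.Tendsto (fun N => t N k) Filter.atTop (nhds (tl k))) :
    (Summable fun k => tl k ^ 2) ∧ (∑' k, tl k ^ 2) ≤ M ∧
    ∀ d : ℕ, 2 ≤ d →
      Filter.Tendsto (fun N => (∑' k, t N k ^ (2 * d)) ^ ((1 : ℝ) / (2 * d)))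
        Filter.atTop (nhds ((∑' k, tl k ^ (2 * d)) ^ ((1 : ℝ) / (2 * d)))) := by
  -- uniform partial sum bound for t N
  have hpartN : ∀ N n, ∑ i ∈ Finset.range n, t N i ^ 2 ≤ M := fun N n =>
    le_trans (Summable.sum_le_tsum _ (fun i _ => sq_nonneg _) (hsum N)) (hM N)
  -- pointwise bound from antitonicity
  have hbd : ∀ N k, t N k ^ 2 ≤ M / (k + 1) := by
    intro N k
    rw [le_div_iff₀ (by positivity)]
    have h1 : t N k ^ 2 * ((k : ℝ) + 1) = ∑ _i ∈ Finset.range (k + 1), t N k ^ 2 := by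
      rw [Finset.sum_const, Finset.card_range, nsmul_eq_mul]
      push_cast; ring
    rw [h1]
    refine le_trans (Finset.sum_le_sum (fun i hi => ?_)) (hpartN N (k + 1))
    exact pow_le_pow_left₀ (hpos N k) (hanti N (Nat.lt_succ_iff.mp (Finset.mem_range.mp hi))) 2
  have hpart : ∀ n, ∑ i ∈ Finset.range n, tl i ^ 2 ≤ M := by
    intro n
    have htend : Filter.Tendsto (fun N => ∑ i ∈ Finset.range n, t N i ^ 2)
        Filter.atTop (nhds (∑ i ∈ Finset.range n, tl i ^ 2)) :=
      tendsto_finset_sum _ (fun i _ => (hlim i).pow 2)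
    exact le_of_tendsto htend (Filter.Eventually.of_forall (fun N => hpartN N n))
  have hs1 : Summable fun k => tl k ^ 2 :=
    summable_of_sum_range_le (fun n => sq_nonneg _) hpart
  refine ⟨hs1, Real.tsum_le_of_sum_range_le (fun n => sq_nonneg _) hpart, ?_⟩
  intro d hd
  have hM0 : 0 ≤ M := le_trans (tsum_nonneg (fun k => sq_nonneg (t 0 k))) (hM 0)
  -- dominating function
  have hgsum : Summable (fun k : ℕ => (M / (k + 1)) ^ d) := by
    have h1 : Summable (fun k : ℕ => 1 / ((k : ℝ) + 1) ^ d) := by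
      have := (summable_nat_add_iff 1).mpr
        (Real.summable_one_div_nat_pow.mpr (lt_of_lt_of_le one_lt_two hd))
      refine this.congr (fun n => ?_)
      push_cast; ring
    refine (h1.mul_left (M ^ d)).congr (fun k => ?_)
    rw [div_pow]; ring
  have hbound : ∀ N k, ‖t N k ^ (2 * d)‖ ≤ (M / (k + 1)) ^ d := by
    intro N k
    rw [Real.norm_of_nonneg (pow_nonneg (hpos N k) _), pow_mul]
    exact pow_le_pow_left₀ (sq_nonneg _) (hbd N k) d
  have htend : Filter.Tendsto (fun N => ∑' k, t N k ^ (2 * d)) Filter.atTop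
      (nhds (∑' k, tl k ^ (2 * d))) :=
    tendsto_tsum_of_dominated_convergence hgsum (fun k => (hlim k).pow (2 * d))
      (Filter.Eventually.of_forall hbound)
  have hcont : ContinuousAt (fun x : ℝ => x ^ ((1 : ℝ) / (2 * d))) (∑' k, tl k ^ (2 * d)) :=
    Real.continuousAt_rpow_const _ _ (Or.inr (by positivity))
  exact hcont.tendsto.comp htend
end

section
/- Let t^{(N)} be weakly decreasing non-negative sequences with |t^{(N)}|_2² ≤ M for all N, and suppose lim_{N→∞} |t^{(N)}|_{2d} = τ_{2d} exists for all integers d ≥ 2. Then lim_{N→∞} t_1^{(N)} exists and equals lim_{d→∞} τ_{2d}, and t^{(N)} converges pointwise to a weakly decreasing sequence t ∈ ℓ² with t_i = lim_N t_i^{(N)}. -/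
open Filter

private lemma aux_le_of_freq {f : ℕ → ℝ} {a b : ℝ}
    (hf : Tendsto f atTop (nhds a)) (h : ∃ᶠ n in atTop, f n ≤ b) : a ≤ b := by
  by_contra hab
  push_neg at hab
  have he : ∀ᶠ n in atTop, b < f n := hf.eventually (eventually_gt_nhds hab)
  rcases (h.and_eventually he).exists with ⟨n, h1, h2⟩
  linarith

private lemma aux_ge_of_freq {f : ℕ → ℝ} {a b : ℝ}
    (hf : Tendsto f atTop (nhds a)) (h : ∃ᶠ n in atTop, b ≤ f n) : b ≤ a := by
  by_contra hab
  push_neg at hab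
  have he : ∀ᶠ n in atTop, f n < b := hf.eventually (eventually_lt_nhds hab)
  rcases (h.and_eventually he).exists with ⟨n, h1, h2⟩
  linarith

private lemma pow_contra {a b M : ℝ} (hb : 0 ≤ b) (hab : b < a)
    (h : ∃ᶠ d in atTop, a ^ (2*d) ≤ b ^ (2*d-2) * M) : False := by
  have ha : 0 < a := lt_of_le_of_lt hb hab
  rcases eq_or_lt_of_le hb with hb0 | hb0
  · rcases (h.and_eventually (eventually_ge_atTop 2)).exists with ⟨d, h1, hd⟩
    have hz : b ^ (2*d-2) = 0 := by
      rw [← hb0]; exact zero_pow (by omega)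
    rw [hz, zero_mul] at h1
    exact absurd h1 (not_le.mpr (pow_pos ha _))
  · have hr : 1 < a / b := (one_lt_div hb0).mpr hab
    have htend := tendsto_pow_atTop_atTop_of_one_lt hr
    have he : ∀ᶠ d in atTop, M / b ^ 2 < (a/b) ^ d := htend.eventually_gt_atTop (M / b^2)
    rcases (h.and_eventually (he.and (eventually_ge_atTop 2))).exists with ⟨d, h1, h2, hd⟩
    have hbd : (0:ℝ) < b ^ (2*d) := pow_pos hb0 _
    have hkey : (a/b) ^ (2*d) ≤ M / b ^ 2 := by
      rw [div_pow, div_le_div_iff₀ hbd (by positivity)]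
      have hbb : b ^ (2*d-2) * b ^ 2 = b ^ (2*d) := by
        rw [← pow_add]; congr 1; omega
      calc a ^ (2*d) * b ^ 2 ≤ (b ^ (2*d-2) * M) * b ^ 2 :=
            mul_le_mul_of_nonneg_right h1 (sq_nonneg b)
        _ = M * b ^ (2*d) := by rw [← hbb]; ring
    have hmono : (a/b) ^ d ≤ (a/b) ^ (2*d) := pow_le_pow_right₀ (le_of_lt hr) (by omega)
    linarith

private lemma sum_pow {s : ℕ → ℝ} (hanti : Antitone s) (hpos : ∀ k, 0 ≤ s k)
    (hsum : Summable fun k => s k ^ 2) {d : ℕ} (hd : 1 ≤ d) :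
    Summable (fun k => s k ^ (2*d)) ∧
      s 0 ^ (2*d) ≤ (∑' k, s k ^ (2*d)) ∧
      (∑' k, s k ^ (2*d)) ≤ s 0 ^ (2*d-2) * (∑' k, s k ^ 2) := by
  have hle : ∀ k, s k ^ (2*d) ≤ s 0 ^ (2*d-2) * s k ^ 2 := by
    intro k
    have h1 : s k ^ (2*d) = s k ^ (2*d-2) * s k ^ 2 := by
      rw [← pow_add]; congr 1; omega
    rw [h1]
    exact mul_le_mul_of_nonneg_right
      (pow_le_pow_left₀ (hpos k) (hanti (Nat.zero_le k)) _) (sq_nonneg _)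
  have hs : Summable (fun k => s k ^ (2*d)) :=
    Summable.of_nonneg_of_le (fun k => pow_nonneg (hpos k) _) hle (hsum.mul_left _)
  refine ⟨hs, ?_, ?_⟩
  · exact Summable.le_tsum hs 0 (fun j _ => pow_nonneg (hpos j) _)
  · calc (∑' k, s k ^ (2*d)) ≤ ∑' k, s 0 ^ (2*d-2) * s k ^ 2 :=
        Summable.tsum_le_tsum hle hs (hsum.mul_left _)
      _ = s 0 ^ (2*d-2) * (∑' k, s k ^ 2) := tsum_mul_left

private lemma key {s : ℕ → ℕ → ℝ} {M : ℝ} {S : ℕ → ℝ}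
    (hanti : ∀ N, Antitone (s N)) (hpos : ∀ N k, 0 ≤ s N k)
    (hsum : ∀ N, Summable fun k => s N k ^ 2) (hM : ∀ N, (∑' k, s N k ^ 2) ≤ M)
    (hS : ∀ d, 2 ≤ d → Tendsto (fun N => ∑' k, s N k ^ (2*d)) atTop (nhds (S d))) :
    ∃ L, 0 ≤ L ∧ Tendsto (fun N => s N 0) atTop (nhds L) ∧
      ∀ d, 2 ≤ d → L ^ (2*d) ≤ S d ∧ S d ≤ L ^ (2*d-2) * M := by
  set u : ℕ → ℝ := fun N => s N 0 with hu
  have hM0 : 0 ≤ M := le_trans (tsum_nonneg (fun k => sq_nonneg _)) (hM 0)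
  have hu2 : ∀ N, u N ^ 2 ≤ M := fun N =>
    le_trans (Summable.le_tsum (hsum N) 0 (fun j _ => sq_nonneg _)) (hM N)
  have hub : ∀ N, u N ≤ Real.sqrt M := fun N => (Real.le_sqrt (hpos N 0) hM0).mpr (hu2 N)
  have hbdd : IsBoundedUnder (· ≤ ·) atTop u := isBoundedUnder_of ⟨_, hub⟩
  have hbddb : IsBoundedUnder (· ≥ ·) atTop u := isBoundedUnder_of ⟨0, fun N => hpos N 0⟩
  set L := limsup u atTop with hL
  have hL0 : 0 ≤ L :=
    le_limsup_of_frequently_le (Frequently.of_forall (fun N => hpos N 0)) hbdd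
  have h1 : ∀ N d, 1 ≤ d → u N ^ (2*d) ≤ ∑' k, s N k ^ (2*d) :=
    fun N d hd => (sum_pow (hanti N) (hpos N) (hsum N) hd).2.1
  have h2 : ∀ N d, 1 ≤ d → (∑' k, s N k ^ (2*d)) ≤ u N ^ (2*d-2) * M := by
    intro N d hd
    refine le_trans (sum_pow (hanti N) (hpos N) (hsum N) hd).2.2 ?_
    exact mul_le_mul_of_nonneg_left (hM N) (pow_nonneg (hpos N 0) _)
  have hlow : ∀ ε > (0:ℝ), ∀ᶠ N in atTop, L - ε < u N := by
    intro ε hε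
    by_contra hc
    have hfreq : ∃ᶠ N in atTop, u N ≤ L - ε := by
      have := not_eventually.mp hc
      exact this.mono (fun N hN => not_lt.mp hN)
    rcases hfreq.exists with ⟨N0, hN0⟩
    have hbε : 0 ≤ L - ε := le_trans (hpos N0 0) hN0
    have hSb : ∀ d, 2 ≤ d → S d ≤ (L - ε) ^ (2*d-2) * M := by
      intro d hd
      refine aux_le_of_freq (hS d hd) (hfreq.mono ?_)
      intro N hN
      refine le_trans (h2 N d (by omega)) ?_
      exact mul_le_mul_of_nonneg_right (pow_le_pow_left₀ (hpos N 0) hN _) hM0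
    have haS : ∀ d, 2 ≤ d → (L - ε/2) ^ (2*d) ≤ S d := by
      intro d hd
      have hfa : ∃ᶠ N in atTop, L - ε/2 < u N :=
        frequently_lt_of_lt_limsup hbddb.isCoboundedUnder_le (by linarith)
      refine aux_ge_of_freq (hS d hd) (hfa.mono ?_)
      intro N hN
      exact le_trans (pow_le_pow_left₀ (by linarith) (le_of_lt hN) _) (h1 N d (by omega))
    exact pow_contra hbε (by linarith) (((eventually_ge_atTop 2).mono
      (fun d hd => le_trans (haS d hd) (hSb d hd))).frequently)
  have hut : Tendsto u atTop (nhds L) := by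
    rw [tendsto_order]
    constructor
    · intro a ha
      have := hlow (L - a) (by linarith)
      refine this.mono (fun N hN => ?_)
      linarith
    · intro a ha
      exact eventually_lt_of_limsup_lt (by linarith [ha]) hbdd
  refine ⟨L, hL0, hut, fun d hd => ⟨?_, ?_⟩⟩
  · exact le_of_tendsto_of_tendsto' (hut.pow (2*d)) (hS d hd) (fun N => h1 N d (by omega))
  · exact le_of_tendsto_of_tendsto' (hS d hd) ((hut.pow (2*d-2)).mul_const M)
      (fun N => h2 N d (by omega))

/-- If the 2d-norms of weakly decreasing non-negative sequences with uniformly bounded 2-norms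
converge for all d ≥ 2, then the sequences converge pointwise to a weakly decreasing ℓ² limit,
the first entries converge, and `lim_N t₁⁽ᴺ⁾ = lim_d τ_{2d}`. -/
theorem stmt4 (t : ℕ → ℕ → ℝ) (M : ℝ) (τ : ℕ → ℝ)
    (hanti : ∀ N, Antitone (t N)) (hpos : ∀ N k, 0 ≤ t N k)
    (hsum : ∀ N, Summable fun k => t N k ^ 2) (hM : ∀ N, (∑' k, t N k ^ 2) ≤ M)
    (hτ : ∀ d : ℕ, 2 ≤ d →
      Filter.Tendsto (fun N => (∑' k, t N k ^ (2 * d)) ^ ((1 : ℝ) / (2 * d)))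
        Filter.atTop (nhds (τ d))) :
    ∃ tl : ℕ → ℝ, Antitone tl ∧ (∀ k, 0 ≤ tl k) ∧ (Summable fun k => tl k ^ 2) ∧
      (∀ k, Filter.Tendsto (fun N => t N k) Filter.atTop (nhds (tl k))) ∧
      Filter.Tendsto (fun N => t N 0) Filter.atTop (nhds (tl 0)) ∧
      Filter.Tendsto τ Filter.atTop (nhds (tl 0)) := by
  have hM0 : 0 ≤ M := le_trans (tsum_nonneg (fun k => sq_nonneg _)) (hM 0)
  -- raw sums converge to τ d ^ (2d)
  have hraw : ∀ d : ℕ, 2 ≤ d →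
      Tendsto (fun N => ∑' k, t N k ^ (2*d)) atTop (nhds (τ d ^ (2*d))) := by
    intro d hd
    have h := (hτ d hd).pow (2*d)
    refine h.congr (fun N => ?_)
    have hnn : 0 ≤ ∑' k, t N k ^ (2*d) := tsum_nonneg (fun k => pow_nonneg (hpos N k) _)
    rw [← Real.rpow_natCast ((∑' k, t N k ^ (2*d)) ^ ((1:ℝ)/(2*(d:ℝ)))) (2*d),
        ← Real.rpow_mul hnn]
    have hcast : ((1:ℝ)/(2*(d:ℝ))) * ((2*d : ℕ) : ℝ) = 1 := by
      have : (d:ℝ) ≠ 0 := Nat.cast_ne_zero.mpr (by omega)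
      push_cast
      field_simp
    rw [hcast, Real.rpow_one]
  -- shifted family facts
  have shift_anti : ∀ N k, Antitone (fun i => t N (i + k)) :=
    fun N k i j hij => hanti N (Nat.add_le_add_right hij k)
  have shift_sum : ∀ N k, Summable (fun i => t N (i + k) ^ 2) := fun N k =>
    (summable_nat_add_iff k).mpr (hsum N)
  have shift_M : ∀ N k, (∑' i, t N (i + k) ^ 2) ≤ M := by
    intro N k
    have h := Summable.sum_add_tsum_nat_add (f := fun j => t N j ^ 2) k (hsum N)
    have hpart : 0 ≤ ∑ i ∈ Finset.range k, t N i ^ 2 :=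
      Finset.sum_nonneg (fun i _ => sq_nonneg _)
    have := hM N
    linarith
  -- by induction : the shifted power sums converge
  have claim : ∀ k, ∃ S : ℕ → ℝ, ∀ d, 2 ≤ d →
      Tendsto (fun N => ∑' i, t N (i + k) ^ (2*d)) atTop (nhds (S d)) := by
    intro k
    induction k with
    | zero => exact ⟨fun d => τ d ^ (2*d), fun d hd => by simpa using hraw d hd⟩
    | succ k ih =>
      obtain ⟨S, hS⟩ := ih
      obtain ⟨L, hL0, hLt, _⟩ := key (fun N => shift_anti N k) (fun N i => hpos N _)
        (fun N => shift_sum N k) (fun N => shift_M N k) hS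
      refine ⟨fun d => S d - L ^ (2*d), fun d hd => ?_⟩
      have heq : ∀ N, (∑' i, t N (i + (k+1)) ^ (2*d)) =
          (∑' i, t N (i + k) ^ (2*d)) - t N (0 + k) ^ (2*d) := by
        intro N
        have hsp := (sum_pow (shift_anti N k) (fun i => hpos N _) (shift_sum N k)
          (d := d) (by omega)).1
        have h0 := Summable.tsum_eq_zero_add hsp
        have hre : (∑' i, t N ((i+1) + k) ^ (2*d)) = ∑' i, t N (i + (k+1)) ^ (2*d) := by
          congr 1
          funext i
          congr 2
          omega
        rw [hre] at h0
        linarith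
      have ht := (hS d hd).sub (hLt.pow (2*d))
      exact ht.congr (fun N => (heq N).symm)
  -- pointwise limits
  have hptw : ∀ k, ∃ L, 0 ≤ L ∧ Tendsto (fun N => t N k) atTop (nhds L) := by
    intro k
    obtain ⟨S, hS⟩ := claim k
    obtain ⟨L, hL0, hLt, _⟩ := key (fun N => shift_anti N k) (fun N i => hpos N _)
      (fun N => shift_sum N k) (fun N => shift_M N k) hS
    simp only [Nat.zero_add] at hLt
    exact ⟨L, hL0, hLt⟩
  choose tl htl0 htl using hptw
  have hanti_tl : Antitone tl := antitone_nat_of_succ_le (fun k =>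
    le_of_tendsto_of_tendsto' (htl (k+1)) (htl k) (fun N => hanti N (Nat.le_succ k)))
  have hsum_tl : Summable fun k => tl k ^ 2 := by
    refine summable_of_sum_range_le (c := M) (fun n => sq_nonneg _) (fun n => ?_)
    have ht : Tendsto (fun N => ∑ i ∈ Finset.range n, t N i ^ 2) atTop
        (nhds (∑ i ∈ Finset.range n, tl i ^ 2)) :=
      tendsto_finset_sum _ (fun i _ => (htl i).pow 2)
    refine le_of_tendsto ht (Eventually.of_forall (fun N => ?_))
    exact le_trans (Summable.sum_le_tsum _ (fun i _ => sq_nonneg _) (hsum N)) (hM N)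
  -- the τ limit
  obtain ⟨L, hL0, hLt, hineq⟩ := key (S := fun d => τ d ^ (2*d)) hanti hpos hsum hM hraw
  have hLtl : L = tl 0 := tendsto_nhds_unique hLt (htl 0)
  have hτnn : ∀ d, 2 ≤ d → 0 ≤ τ d := by
    intro d hd
    refine ge_of_tendsto (hτ d hd) (Eventually.of_forall (fun N => ?_))
    exact Real.rpow_nonneg (tsum_nonneg (fun k => pow_nonneg (hpos N k) _)) _
  have hLle : ∀ d, 2 ≤ d → L ≤ τ d := by
    intro d hd
    exact (pow_le_pow_iff_left₀ hL0 (hτnn d hd) (by omega)).mp (hineq d hd).1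
  have hτt : Tendsto τ atTop (nhds L) := by
    rcases eq_or_lt_of_le hL0 with hLz | hLz
    · have hev : ∀ᶠ d in atTop, τ d = 0 := by
        filter_upwards [eventually_ge_atTop 2] with d hd
        have h2 := (hineq d hd).2
        rw [← hLz, zero_pow (n := 2*d-2) (by omega), zero_mul] at h2
        have hz : τ d ^ (2*d) = 0 :=
          le_antisymm h2 (pow_nonneg (hτnn d hd) _)
        exact pow_eq_zero_iff (by omega) |>.mp hz
      rw [← hLz]
      exact tendsto_const_nhds.congr' (hev.mono (fun d hd => hd.symm))
    · rw [tendsto_order]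
      constructor
      · intro a ha
        filter_upwards [eventually_ge_atTop 2] with d hd
        exact lt_of_lt_of_le ha (hLle d hd)
      · intro a ha
        by_contra hc
        have hfreq : ∃ᶠ d in atTop, a ≤ τ d :=
          (not_eventually.mp hc).mono (fun d hd => not_lt.mp hd)
        refine pow_contra (M := M) hL0 ha ?_
        refine ((hfreq.and_eventually (eventually_ge_atTop 2)).mono ?_)
        rintro d ⟨hda, hd2⟩
        calc a ^ (2*d) ≤ τ d ^ (2*d) :=
              pow_le_pow_left₀ (le_trans hL0 (le_of_lt ha)) hda _
          _ ≤ L ^ (2*d-2) * M := (hineq d hd2).2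
  rw [hLtl] at hτt
  exact ⟨tl, hanti_tl, htl0, hsum_tl, htl, htl 0, hτt⟩
end

section
/- For every weakly decreasing non-negative ℓ² sequence t and every M ≥ |t|_2², there exists a sequence t^(N) of finitely supported weakly decreasing non-negative sequences with |t^(N)|_2² = M for all N which converges pointwise to t. -/
/-!
Keep the first `N + 1` entries of `t` and raise each of their squares by the same amount
`ε_N = (M - ∑_{k ≤ N} t_k²) / (N + 1)`, so that the squared norm becomes exactly `M`.
Raising the squares uniformly preserves monotonicity, and `ε_N → 0` because the numerator
converges (to `M - ‖t‖₂²`), which gives pointwise convergence.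
-/

open Filter Topology

noncomputable def raiseSq (t : ℕ → ℝ) (n : ℕ) (ε : ℝ) (k : ℕ) : ℝ :=
  if k ≤ n then √(t k ^ 2 + ε) else 0

namespace raiseSq

variable {t : ℕ → ℝ} {n : ℕ} {ε : ℝ}

lemma nonneg (t : ℕ → ℝ) (n : ℕ) (ε : ℝ) (k : ℕ) : 0 ≤ raiseSq t n ε k := by
  unfold raiseSq; split_ifs <;> positivity

lemma eq_zero_of_lt {k : ℕ} (hk : n < k) : raiseSq t n ε k = 0 :=
  if_neg (not_le.mpr hk)

lemma antitone (hanti : Antitone t) (h0 : ∀ k, 0 ≤ t k) : Antitone (raiseSq t n ε) := by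
  intro k j hkj
  by_cases hj : j ≤ n
  · have hsq : t j ^ 2 ≤ t k ^ 2 := pow_le_pow_left₀ (h0 j) (hanti hkj) 2
    rw [raiseSq, raiseSq, if_pos hj, if_pos (hkj.trans hj)]
    gcongr
  · rw [raiseSq, if_neg hj]
    exact nonneg t n ε k

lemma tsum_sq (hε : 0 ≤ ε) :
    ∑' k, raiseSq t n ε k ^ 2 = ∑ k ∈ Finset.range (n + 1), t k ^ 2 + (n + 1) * ε := by
  rw [tsum_eq_sum (s := Finset.range (n + 1)) fun k hk => by
    rw [eq_zero_of_lt (by simpa using hk), zero_pow two_ne_zero]]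
  rw [Finset.sum_congr rfl fun k hk => by
    rw [raiseSq, if_pos (Nat.lt_succ_iff.mp (Finset.mem_range.mp hk)),
      Real.sq_sqrt (by positivity)]]
  simp [Finset.sum_add_distrib]

lemma tendsto_apply {ε : ℕ → ℝ} (hε : Tendsto ε atTop (𝓝 0)) {k : ℕ} (hk : 0 ≤ t k) :
    Tendsto (fun N => raiseSq t N (ε N) k) atTop (𝓝 (t k)) := by
  have hlim : Tendsto (fun N => √(t k ^ 2 + ε N)) atTop (𝓝 √(t k ^ 2 + 0)) :=
    (tendsto_const_nhds.add hε).sqrt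
  rw [add_zero, Real.sqrt_sq hk] at hlim
  refine hlim.congr' ?_
  filter_upwards [eventually_ge_atTop k] with N hN
  rw [raiseSq, if_pos hN]

end raiseSq

lemma tendsto_div_add_one_nhds_zero {c : ℕ → ℝ} {L : ℝ} (hc : Tendsto c atTop (𝓝 L)) :
    Tendsto (fun N : ℕ => c N / (N + 1)) atTop (𝓝 0) := by
  have h := hc.mul (tendsto_one_div_add_atTop_nhds_zero_nat (𝕜 := ℝ))
  rw [mul_zero] at h
  exact h.congr fun N => (div_eq_mul_one_div _ _).symm

/-- For every weakly decreasing non-negative ℓ² sequence `t` and every `M ≥ |t|₂²`, there is a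
sequence of finitely supported weakly decreasing non-negative sequences, each with squared 2-norm
exactly `M`, converging pointwise to `t`. -/
theorem stmt12 (t : ℕ → ℝ) (hanti : Antitone t) (h0 : ∀ k, 0 ≤ t k)
    (hsum : Summable fun k => t k ^ 2) (M : ℝ) (hM : (∑' k, t k ^ 2) ≤ M) :
    ∃ T : ℕ → ℕ → ℝ,
      (∀ N, Antitone (T N)) ∧ (∀ N k, 0 ≤ T N k) ∧
      (∀ N, ∃ n : ℕ, ∀ i, n ≤ i → T N i = 0) ∧
      (∀ N, (∑' k, T N k ^ 2) = M) ∧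
      ∀ k, Filter.Tendsto (fun N => T N k) Filter.atTop (nhds (t k)) := by
  set rest : ℕ → ℝ := fun N => M - ∑ k ∈ Finset.range (N + 1), t k ^ 2
  have rest_nonneg (N : ℕ) : 0 ≤ rest N :=
    sub_nonneg.mpr ((hsum.sum_le_tsum _ fun k _ => sq_nonneg (t k)).trans hM)
  have rest_tendsto : Tendsto rest atTop (𝓝 (M - ∑' k, t k ^ 2)) :=
    tendsto_const_nhds.sub ((tendsto_add_atTop_iff_nat 1).mpr hsum.hasSum.tendsto_sum_nat)
  refine ⟨fun N => raiseSq t N (rest N / (N + 1)), fun N => raiseSq.antitone hanti h0,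
    fun N => raiseSq.nonneg t N _, fun N => ⟨N + 1, fun i hi => raiseSq.eq_zero_of_lt hi⟩,
    fun N => ?_,
    fun k => raiseSq.tendsto_apply (tendsto_div_add_one_nhds_zero rest_tendsto) (h0 k)⟩
  rw [raiseSq.tsum_sq (div_nonneg (rest_nonneg N) (by positivity)),
    mul_div_cancel₀ _ (by positivity)]
  ring
end

section
/- Suppose the coefficients of P(q) = Π_{k=1}^m (1-q^{a_k})/(1-q^{b_k}) are nonnegative integers, where a_k, b_k are positive integers, and let X be the random variable with P[X = k] proportional to the coefficient of q^k in P(q). Then for every d ≥ 2, the d-th cumulant of X is κ_d = (B_d/d)(Σ_{k=1}^m a_k^d - b_k^d), where B_d is the d-th Bernoulli number (with B_1 = 1/2 convention for d=1). -/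
/-!
Write `φ(t) = (eᵗ - 1)/t`, with `φ(0) = 1`. Substituting `q = eᵗ` into
`P(q) ∏ (1 - q^{b_k}) = ∏ (1 - q^{a_k})` and dividing by `(-t)^m` gives
`P(eᵗ) ∏ b_k φ(b_k t) = ∏ a_k φ(a_k t)`, first for `t ≠ 0` and then by continuity for all `t`.
So the cumulant generating function `log (P(eᵗ)/P(1))` equals `∑ log φ(a_k t) - ∑ log φ(b_k t)`
up to a constant, and `κ_d = (∑ a_k^d - b_k^d) (log φ)^{(d)}(0)`.
Finally `(log φ)^{(n)}(0) = B'_n/n` for `n ≥ 1`: applying Leibniz's rule to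
`(log φ)'(t) (eᵗ - 1) = eᵗ - φ(t)` at `0` yields the triangular recursion
`∑_{k<N} C(N,k) u_{k+1} = N/(N+1)`, which `u_n = B'_n/n` also satisfies since
`∑_{k≤N} C(N+1,k) B'_k = N+1`. For `d ≥ 2`, `B'_d = B_d`.
-/

open MeasureTheory ProbabilityTheory Polynomial Finset Real
open scoped ContDiff

lemma eq_of_sum_range_choose_mul_eq {K : Type*} [Field K] [CharZero K] {u v : ℕ → K}
    (h : ∀ N, ∑ k ∈ range N, (N.choose k : K) * u k = ∑ k ∈ range N, (N.choose k : K) * v k) :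
    u = v := by
  funext n
  induction n using Nat.strong_induction_on with
  | _ n ih =>
    have hn := h (n + 1)
    rw [sum_range_succ, sum_range_succ,
      sum_congr rfl fun k hk => congrArg _ (ih k (mem_range.1 hk))] at hn
    simpa [Nat.choose_succ_self_right, Nat.cast_add_one_ne_zero] using hn

lemma sum_range_choose_mul_bernoulli'_div (N : ℕ) :
    ∑ k ∈ range N, (N.choose k : ℚ) * (bernoulli' (k + 1) / (k + 1)) = N / (N + 1) := by
  have h := sum_bernoulli' (N + 1)
  rw [sum_range_succ'] at h
  rw [eq_div_iff (Nat.cast_add_one_ne_zero N), sum_mul]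
  calc ∑ k ∈ range N, (N.choose k : ℚ) * (bernoulli' (k + 1) / (k + 1)) * (N + 1)
      = ∑ k ∈ range N, ((N + 1).choose (k + 1) : ℚ) * bernoulli' (k + 1) := by
        refine sum_congr rfl fun k _ => ?_
        have h : ((N + 1 : ℕ) : ℚ) * N.choose k = (N + 1).choose (k + 1) * (k + 1 : ℕ) := by
          exact_mod_cast Nat.add_one_mul_choose_eq N k
        push_cast at h
        field_simp
        linear_combination bernoulli' (k + 1) * h
    _ = N := by
        simp only [Nat.choose_zero_right, bernoulli'_zero, Nat.cast_one, mul_one,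
          Nat.cast_add] at h
        linarith

noncomputable def expSlope : ℝ → ℝ := dslope exp 0

lemma mul_expSlope (t : ℝ) : t * expSlope t = exp t - 1 := by
  simpa [expSlope, slope, exp_zero] using sub_smul_dslope exp 0 t

lemma expSlope_of_ne_zero {t : ℝ} (ht : t ≠ 0) : expSlope t = (exp t - 1) / t := by
  rw [eq_div_iff ht, mul_comm, mul_expSlope]

lemma expSlope_pos (t : ℝ) : 0 < expSlope t := by
  rcases lt_trichotomy t 0 with ht | rfl | ht
  · rw [expSlope_of_ne_zero ht.ne]
    exact div_pos_of_neg_of_neg (by linarith [exp_lt_one_iff.2 ht]) ht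
  · simp [expSlope, dslope_same]
  · rw [expSlope_of_ne_zero ht.ne']
    exact div_pos (by linarith [add_one_lt_exp ht.ne']) ht

lemma contDiff_expSlope {n : WithTop ℕ∞} : ContDiff ℝ n expSlope := by
  refine AnalyticOnNhd.contDiff fun t _ => ?_
  rcases eq_or_ne t 0 with rfl | ht
  · obtain ⟨p, hp⟩ := analyticAt_rexp (x := 0)
    exact ⟨_, hp.has_fpower_series_dslope_fslope⟩
  · have h : AnalyticAt ℝ (fun s => (exp s - 1) / s) t :=
      ((analyticAt_rexp).sub analyticAt_const).div analyticAt_id ht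
    refine h.congr ?_
    filter_upwards [isOpen_ne.mem_nhds ht] with s hs
    exact (expSlope_of_ne_zero hs).symm

lemma iteratedDeriv_exp_sub_one_zero (n : ℕ) :
    iteratedDeriv n (fun t => exp t - 1) 0 = if n = 0 then 0 else 1 := by
  rcases n with _ | n
  · simp
  · rw [iteratedDeriv_succ', if_neg n.succ_ne_zero]
    simp [iteratedDeriv_eq_iterate, iter_deriv_exp]

lemma iteratedDeriv_expSlope_zero (n : ℕ) : iteratedDeriv n expSlope 0 = 1 / (n + 1) := by
  have h := iteratedDeriv_exp_sub_one_zero (n + 1)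
  rw [← funext mul_expSlope, iteratedDeriv_fun_mul (f := fun t => t) contDiffAt_id
    (contDiff_expSlope.contDiffAt), sum_eq_single 1] at h
  · simp only [Nat.choose_one_right, iteratedDeriv_fun_id_zero, if_true, mul_one,
      Nat.add_sub_cancel, Nat.add_one_ne_zero, if_false, Nat.cast_add, Nat.cast_one] at h
    field_simp
    linarith
  · intro k _ hk
    simp [iteratedDeriv_fun_id_zero, hk]
  · simp

noncomputable def logExpSlope : ℝ → ℝ := fun t => log (expSlope t)

lemma contDiff_logExpSlope {n : WithTop ℕ∞} : ContDiff ℝ n logExpSlope :=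
  contDiff_expSlope.log fun t => (expSlope_pos t).ne'

lemma deriv_logExpSlope_mul_exp_sub_one (t : ℝ) :
    deriv logExpSlope t * (exp t - 1) = exp t - expSlope t := by
  have hdiff : DifferentiableAt ℝ expSlope t :=
    (contDiff_expSlope (n := 1)).differentiable one_ne_zero t
  have hprod : HasDerivAt (fun t => t * expSlope t) (1 * expSlope t + t * deriv expSlope t) t :=
    (hasDerivAt_id t).mul hdiff.hasDerivAt
  rw [funext mul_expSlope] at hprod
  have hexp := hprod.unique ((hasDerivAt_exp t).sub_const 1)
  unfold logExpSlope
  rw [deriv.log hdiff (expSlope_pos t).ne', ← mul_expSlope]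
  field_simp [(expSlope_pos t).ne']
  linarith

lemma sum_range_choose_mul_iteratedDeriv_logExpSlope (N : ℕ) :
    ∑ k ∈ range N, (N.choose k : ℝ) * iteratedDeriv (k + 1) logExpSlope 0 = N / (N + 1) := by
  have h := congrArg (iteratedDeriv N · 0) (funext deriv_logExpSlope_mul_exp_sub_one)
  rw [iteratedDeriv_fun_mul (contDiff_logExpSlope.deriv'.contDiffAt)
      (contDiff_exp.sub contDiff_const).contDiffAt,
    iteratedDeriv_fun_sub contDiff_exp.contDiffAt contDiff_expSlope.contDiffAt,
    sum_range_succ] at h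
  have hexp : iteratedDeriv N exp 0 = 1 := by simp [iteratedDeriv_eq_iterate]
  simp only [iteratedDeriv_exp_sub_one_zero, iteratedDeriv_expSlope_zero, hexp,
    ← iteratedDeriv_succ', Nat.sub_self, if_true, mul_zero, add_zero] at h
  rw [sum_congr rfl fun k hk => by rw [if_neg (Nat.sub_ne_zero_of_lt (mem_range.1 hk)), mul_one]] at h
  rw [h]
  field_simp
  ring

lemma iteratedDeriv_logExpSlope_zero {n : ℕ} (hn : 0 < n) :
    iteratedDeriv n logExpSlope 0 = ((bernoulli' n / n : ℚ) : ℝ) := by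
  obtain ⟨n, rfl⟩ := Nat.exists_eq_add_of_lt hn
  have h := eq_of_sum_range_choose_mul_eq (u := fun k => iteratedDeriv (k + 1) logExpSlope 0)
    (v := fun k => ((bernoulli' (k + 1) / (k + 1) : ℚ) : ℝ)) fun N => by
      rw [sum_range_choose_mul_iteratedDeriv_logExpSlope]
      have h := congrArg ((↑) : ℚ → ℝ) (sum_range_choose_mul_bernoulli'_div N)
      push_cast at h ⊢
      exact h.symm
  simpa using congrFun h n

lemma contDiff_log_mul_expSlope_const_mul {c : ℝ} (hc : 0 < c) {n : WithTop ℕ∞} :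
    ContDiff ℝ n fun t => log (c * expSlope (c * t)) :=
  (contDiff_const.mul (contDiff_expSlope.comp (contDiff_const.mul contDiff_id))).log
    fun _ => (mul_pos hc (expSlope_pos _)).ne'

lemma iteratedDeriv_log_mul_expSlope_const_mul {c : ℝ} (hc : 0 < c) {d : ℕ} (hd : 0 < d) :
    iteratedDeriv d (fun t => log (c * expSlope (c * t))) 0 =
      c ^ d * ((bernoulli' d / d : ℚ) : ℝ) := by
  have h : (fun t => log (c * expSlope (c * t))) = fun t => log c + logExpSlope (c * t) := by
    funext t
    exact log_mul hc.ne' (expSlope_pos _).ne'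
  rw [h, iteratedDeriv_const_add hd, iteratedDeriv_comp_const_mul contDiff_logExpSlope]
  beta_reduce
  rw [mul_zero, iteratedDeriv_logExpSlope_zero hd]

lemma aeval_pos_of_coeff_nonneg {P : ℤ[X]} (hP : P ≠ 0) (hco : ∀ k, 0 ≤ P.coeff k) {x : ℝ}
    (hx : 0 < x) : 0 < aeval x P := by
  rw [aeval_eq_sum_range]
  refine sum_pos' (fun k _ => ?_) ⟨P.natDegree, self_mem_range_succ _, ?_⟩
  · have := hco k
    rw [zsmul_eq_mul]
    positivity
  · have : 0 < P.leadingCoeff := (hco _).lt_of_ne' (leadingCoeff_ne_zero.2 hP)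
    rw [zsmul_eq_mul]
    exact mul_pos (Int.cast_pos.2 this) (pow_pos hx _)

lemma intCast_eval_one (P : ℤ[X]) : ((P.eval 1 : ℤ) : ℝ) = aeval (1 : ℝ) P := by
  simpa using (aeval_algebraMap_apply_eq_algebraMap_eval (A := ℝ) (1 : ℤ) P).symm

noncomputable def coeffMeasure (P : ℤ[X]) : Measure ℕ :=
  Measure.sum fun k : ℕ =>
    (ENNReal.ofReal ((P.coeff k : ℝ) / ((P.eval 1 : ℤ) : ℝ))) • Measure.dirac k

lemma mgf_coeffMeasure {P : ℤ[X]} (hP : P ≠ 0) (hco : ∀ k, 0 ≤ P.coeff k) (t : ℝ) :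
    mgf (fun k : ℕ => (k : ℝ)) (coeffMeasure P) t = aeval (exp t) P / aeval 1 P := by
  have hS : 0 < aeval (1 : ℝ) P := aeval_pos_of_coeff_nonneg hP hco one_pos
  rw [mgf, coeffMeasure, integral_sum_dirac fun _ => ENNReal.ofReal_ne_top,
    tsum_eq_sum (s := range (P.natDegree + 1)), aeval_eq_sum_range, sum_div]
  · refine sum_congr rfl fun k _ => ?_
    rw [intCast_eval_one, ENNReal.toReal_ofReal (div_nonneg (Int.cast_nonneg (hco k)) hS.le),
      zsmul_eq_mul, smul_eq_mul, ← exp_nat_mul, mul_comm t]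
    ring
  · intro k hk
    rw [coeff_eq_zero_of_natDegree_lt (by simpa using hk)]
    simp

lemma one_sub_exp_nat_mul (n : ℕ) (t : ℝ) : 1 - exp t ^ n = -t * (n * expSlope (n * t)) := by
  rw [← exp_nat_mul]
  linear_combination mul_expSlope (n * t)

lemma aeval_exp_mul_prod_expSlope {ι : Type*} [Fintype ι] {a b : ι → ℕ} {P : ℤ[X]}
    (hprod : P * ∏ k, (1 - X ^ b k) = ∏ k, (1 - X ^ a k)) (t : ℝ) :
    aeval (exp t) P * ∏ k, (b k * expSlope (b k * t)) = ∏ k, (a k * expSlope (a k * t)) := by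
  have hcont : Continuous expSlope := contDiff_expSlope.continuous (n := 0)
  refine congrFun (Continuous.ext_on (dense_compl_singleton 0)
    (f := fun t => aeval (exp t) P * ∏ k, (b k * expSlope (b k * t)))
    (g := fun t => ∏ k, (a k * expSlope (a k * t))) (by fun_prop) (by fun_prop)
    fun s (hs : s ≠ 0) => ?_) t
  have h := congrArg (aeval (exp s)) hprod
  simp only [map_mul, map_prod, map_sub, map_one, map_pow, aeval_X, one_sub_exp_nat_mul,
    prod_mul_distrib, prod_const] at h
  rw [mul_left_comm] at h
  simpa only [prod_mul_distrib] using mul_left_cancel₀ (pow_ne_zero _ (neg_ne_zero.2 hs)) h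

lemma cgf_coeffMeasure {ι : Type*} [Fintype ι] {a b : ι → ℕ} (ha : ∀ k, 0 < a k)
    (hb : ∀ k, 0 < b k) {P : ℤ[X]} (hP : P ≠ 0) (hco : ∀ k, 0 ≤ P.coeff k)
    (hprod : P * ∏ k, (1 - X ^ b k) = ∏ k, (1 - X ^ a k)) (t : ℝ) :
    cgf (fun k : ℕ => (k : ℝ)) (coeffMeasure P) t =
      -log (aeval 1 P) + (∑ k, log (a k * expSlope (a k * t)) -
        ∑ k, log (b k * expSlope (b k * t))) := by
  have hfactor {c : ℕ} (hc : 0 < c) : 0 < (c : ℝ) * expSlope (c * t) :=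
    mul_pos (Nat.cast_pos.2 hc) (expSlope_pos _)
  have hA := prod_pos fun k (_ : k ∈ univ) => hfactor (ha k)
  have hB := prod_pos fun k (_ : k ∈ univ) => hfactor (hb k)
  rw [cgf, mgf_coeffMeasure hP hco, eq_div_of_mul_eq hB.ne' (aeval_exp_mul_prod_expSlope hprod t),
    log_div (div_pos hA hB).ne' (aeval_pos_of_coeff_nonneg hP hco one_pos).ne',
    log_div hA.ne' hB.ne', log_prod fun k _ => (hfactor (ha k)).ne',
    log_prod fun k _ => (hfactor (hb k)).ne']
  ring

/-- Cumulants of cyclotomic generating functions (Hwang–Zacharovas / Chen–Wang–Wang): if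
`P(q) = Π_k (1-q^{a_k})/(1-q^{b_k})` is a polynomial with non-negative integer coefficients and
`X` is the random variable with `P[X = k]` proportional to the coefficient of `q^k`, then for
`d ≥ 2` the d-th cumulant of `X` is `(B_d/d)(Σ_k a_k^d - b_k^d)`. -/
theorem stmt13 (m : ℕ) (a b : Fin m → ℕ) (ha : ∀ k, 0 < a k) (hb : ∀ k, 0 < b k)
    (P : Polynomial ℤ) (hP : P ≠ 0) (hco : ∀ k, 0 ≤ P.coeff k)
    (hprod : P * (∏ k, (1 - (Polynomial.X : Polynomial ℤ) ^ b k)) =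
      ∏ k, (1 - (Polynomial.X : Polynomial ℤ) ^ a k)) :
    ∀ d : ℕ, 2 ≤ d →
      iteratedDeriv d
        (cgf (fun k : ℕ => (k : ℝ))
          (Measure.sum fun k : ℕ =>
            (ENNReal.ofReal ((P.coeff k : ℝ) / ((P.eval 1 : ℤ) : ℝ))) • Measure.dirac k)) 0 =
        ((bernoulli d : ℚ) : ℝ) / d * ((∑ k, (a k : ℝ) ^ d) - ∑ k, (b k : ℝ) ^ d) := by
  intro d hd
  have hsmooth {c : ℕ} (hc : 0 < c) :=
    (contDiff_log_mul_expSlope_const_mul (Nat.cast_pos.2 hc) (n := d)).contDiffAt (x := 0)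
  change iteratedDeriv d (cgf _ (coeffMeasure P)) 0 = _
  rw [funext (cgf_coeffMeasure ha hb hP hco hprod), iteratedDeriv_const_add (by omega),
    iteratedDeriv_fun_sub (.sum fun k _ => hsmooth (ha k)) (.sum fun k _ => hsmooth (hb k)),
    iteratedDeriv_fun_sum fun k _ => hsmooth (ha k),
    iteratedDeriv_fun_sum fun k _ => hsmooth (hb k)]
  simp only [iteratedDeriv_log_mul_expSlope_const_mul (Nat.cast_pos.2 (ha _)) (by omega : 0 < d),
    iteratedDeriv_log_mul_expSlope_const_mul (Nat.cast_pos.2 (hb _)) (by omega : 0 < d),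
    bernoulli_eq_bernoulli'_of_ne_one (by omega : d ≠ 1), ← sum_mul]
  push_cast
  ring
end

section
/- Among all rooted trees (posets in which every element is covered by at most one element, with a unique maximal element) with n elements and rank r (maximum chain size), where 1 < r ≤ n, the tree H_{n,r} — a chain of r elements with the remaining n-r elements attached as children of the second-smallest chain element — is the unique maximizer of the sum of hook lengths Σ_{u∈P} h_u, where h_u = #{t ∈ P : t ≤ u}. Consequently, for any such tree P, Σ_{k=1}^n k − Σ_{u∈P} h_u ≥ binom(n−r+1, 2). -/
open scoped Classical

/-- The order relation of the tree `H_{n,r}`: a chain on indices `0 < 1 < ⋯ < r-1`, together with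
the remaining `n-r` elements (indices `≥ r`) attached as children of the second-smallest chain
element (index `1`). -/
def Hle {n : ℕ} (r : ℕ) (x y : Fin n) : Prop :=
  x = y ∨ ((x : ℕ) < r ∧ (y : ℕ) < r ∧ (x : ℕ) ≤ (y : ℕ)) ∨
    (r ≤ (x : ℕ) ∧ 1 ≤ (y : ℕ) ∧ (y : ℕ) < r)

/-!
When every element is covered by at most one element, the elements above any `x` form a chain,
so the level `#{t | x ≤ t}` of `x` is at most the rank `r`, and the levels of the elements above
`x` are exactly `1, …, level x`; in particular every level `1, …, r` is attained. Double counting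
turns the hook sum into `∑ₓ level x = ∑_d d · A_d`, where `A_d ≥ 1` elements lie on level `d` and
`∑_d A_d = n`. The deficit `∑_{k=n-r+1}^n k - ∑_d d · A_d` equals `∑_d (r - d)(A_d - 1)`, so it
vanishes iff every level below `r` holds a single element. In that case
`x ≤ y ↔ x = y ∨ (level y < r ∧ level y ≤ level x)`, which is also how `H_{n,r}` is ordered.
-/

open Finset

theorem sum_Icc_id_add_choose_two {m n : ℕ} (h : m ≤ n) :
    ∑ k ∈ Icc (m + 1) n, k + (m + 1).choose 2 = (n + 1).choose 2 := by
  induction n, h using Nat.le_induction with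
  | base => simp
  | succ n hmn ih =>
    rw [sum_Icc_succ_top (by omega), add_right_comm, ih, Nat.choose_succ_succ' (n + 1),
      Nat.choose_one_right, add_comm]

theorem sum_Icc_sub_add_one_eq {r n : ℕ} (h : r ≤ n) :
    ∑ k ∈ Icc (n - r + 1) n, k = ∑ d ∈ Icc 1 r, (d + (n - r)) := by
  have : Icc (n - r + 1) n = (Icc 1 r).map (addRightEmbedding (n - r)) := by
    rw [map_add_right_Icc]; congr 1 <;> omega
  rw [this, sum_map]
  rfl

theorem sum_mul_add_sum_sub_mul_eq {r n : ℕ} (A : ℕ → ℕ) (hA : ∀ d ∈ Icc 1 r, 1 ≤ A d)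
    (hn : ∑ d ∈ Icc 1 r, A d = n) :
    ∑ d ∈ Icc 1 r, d * A d + ∑ d ∈ Icc 1 r, (r - d) * (A d - 1) =
      ∑ k ∈ Icc (n - r + 1) n, k := by
  have htot : ∑ d ∈ Icc 1 r, (A d - 1) + ∑ d ∈ Icc 1 r, 1 = n := by
    rw [← hn, ← sum_add_distrib]
    exact sum_congr rfl fun d hd => Nat.sub_add_cancel (hA d hd)
  simp only [sum_const, Nat.card_Icc, smul_eq_mul, mul_one, add_tsub_cancel_right] at htot
  have hsub : n - r = ∑ d ∈ Icc 1 r, (A d - 1) := by omega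
  rw [sum_Icc_sub_add_one_eq (by omega), ← sum_add_distrib]
  calc ∑ d ∈ Icc 1 r, (d * A d + (r - d) * (A d - 1))
      = ∑ d ∈ Icc 1 r, (d + r * (A d - 1)) := by
        refine sum_congr rfl fun d hd => ?_
        obtain ⟨B, hB⟩ := Nat.exists_eq_add_of_le (hA d hd)
        obtain ⟨s, hs⟩ := Nat.exists_eq_add_of_le (mem_Icc.1 hd).2
        rw [hB, hs, Nat.add_sub_cancel_left, Nat.add_sub_cancel_left]
        ring
    _ = ∑ d ∈ Icc 1 r, (d + (n - r)) := by
        rw [sum_add_distrib, sum_add_distrib, ← mul_sum, sum_const, Nat.card_Icc, smul_eq_mul,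
          hsub, Nat.add_sub_cancel]

theorem sum_sub_mul_eq_zero_iff {r : ℕ} (A : ℕ → ℕ) (hA : ∀ d ∈ Icc 1 r, 1 ≤ A d) :
    ∑ d ∈ Icc 1 r, (r - d) * (A d - 1) = 0 ↔ ∀ d ∈ Ico 1 r, A d = 1 := by
  rw [sum_eq_zero_iff]
  refine ⟨fun h d hd => ?_, fun h d hd => ?_⟩
  · have hd' := mem_Ico.1 hd
    have := hA d (Ico_subset_Icc_self hd)
    rcases mul_eq_zero.1 (h d (Ico_subset_Icc_self hd)) with h' | h' <;> omega
  · rcases (mem_Icc.1 hd).2.lt_or_eq with hdr | rfl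
    · simp [h d (mem_Ico.2 ⟨(mem_Icc.1 hd).1, hdr⟩)]
    · simp

section Level

variable {α : Type*} [Fintype α] [PartialOrder α]

noncomputable def level (x : α) : ℕ := #{t | x ≤ t}

theorem sum_card_filter_le_eq_sum_level : ∑ u : α, #{v | v ≤ u} = ∑ x : α, level x := by
  simp only [level, card_filter]
  exact sum_comm

theorem one_le_level (x : α) : 1 ≤ level x :=
  card_pos.2 ⟨x, by simp⟩

theorem level_strictAnti : StrictAnti (level : α → ℕ) := fun x y hxy =>
  card_lt_card <| (ssubset_iff_of_subset fun t ht => by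
    simp only [mem_filter, mem_univ, true_and] at ht ⊢; exact hxy.le.trans ht).2
    ⟨x, by simp, by simp [hxy.not_ge]⟩

theorem exists_card_le_level {c : Finset α} (hc : IsChain (· ≤ ·) (c : Set α))
    (hne : c.Nonempty) : ∃ m : α, #c ≤ level m := by
  obtain ⟨m, hm, hmax⟩ := exists_max_image c level hne
  refine ⟨m, card_le_card fun x hx => mem_filter.2 ⟨mem_univ x, ?_⟩⟩
  rcases hc.total hm hx with hmx | hxm
  · exact hmx
  rcases hxm.lt_or_eq with hxm | rfl
  · exact absurd (hmax x hx) (level_strictAnti hxm).not_ge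
  · exact le_rfl

theorem isChain_Ici_of_covBy_unique (htree : ∀ x y z : α, x ⋖ y → x ⋖ z → y = z) (x : α) :
    IsChain (· ≤ ·) (Set.Ici x) := by
  induction x using WellFoundedGT.induction with
  | _ x ih =>
    rintro y (hy : x ≤ y) z (hz : x ≤ z) hyz
    rcases hy.eq_or_lt with rfl | hxy
    · exact .inl hz
    rcases hz.eq_or_lt with rfl | hxz
    · exact .inr hy
    obtain ⟨w, hxw, hwy⟩ := exists_covBy_le_of_lt hxy
    obtain ⟨w', hxw', hwz⟩ := exists_covBy_le_of_lt hxz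
    cases htree x w w' hxw hxw'
    exact ih w hxw.lt hwy hwz hyz

theorem level_injOn_Ici (htree : ∀ x y z : α, x ⋖ y → x ⋖ z → y = z) (x : α) :
    Set.InjOn level (Set.Ici x) := fun a ha b hb hab => by
  by_contra hne
  rcases (isChain_Ici_of_covBy_unique htree x).total ha hb with h | h
  · exact (level_strictAnti (h.lt_of_ne hne)).ne' hab
  · exact (level_strictAnti (h.lt_of_ne (Ne.symm hne))).ne hab

theorem image_level_filter_le (htree : ∀ x y z : α, x ⋖ y → x ⋖ z → y = z) (x : α) :
    image level {t | x ≤ t} = Icc 1 (level x) := by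
  refine eq_of_subset_of_card_le (fun d hd => ?_) ?_
  · obtain ⟨t, ht, rfl⟩ := mem_image.1 hd
    exact mem_Icc.2 ⟨one_le_level t, level_strictAnti.antitone (mem_filter.1 ht).2⟩
  · rw [Nat.card_Icc, add_tsub_cancel_right, card_image_of_injOn]
    · rfl
    · exact (level_injOn_Ici htree x).mono fun t ht => (mem_filter.1 ht).2

theorem exists_le_level_eq (htree : ∀ x y z : α, x ⋖ y → x ⋖ z → y = z) {x : α} {d : ℕ}
    (hd : d ∈ Icc 1 (level x)) : ∃ t, x ≤ t ∧ level t = d := by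
  rw [← image_level_filter_le htree x] at hd
  simpa using hd

theorem level_le_of_isChain_card_le (htree : ∀ x y z : α, x ⋖ y → x ⋖ z → y = z) {r : ℕ}
    (hchain : ∀ c : Finset α, IsChain (· ≤ ·) (c : Set α) → #c ≤ r) (x : α) : level x ≤ r :=
  hchain _ (by simpa [Set.Ici] using isChain_Ici_of_covBy_unique htree x)

theorem sum_level_eq_sum_mul_card {r : ℕ} (hlevel : ∀ x : α, level x ∈ Icc 1 r) :
    ∑ x : α, level x = ∑ d ∈ Icc 1 r, d * #{x : α | level x = d} := by
  rw [← sum_fiberwise_of_maps_to fun x _ => hlevel x]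
  exact sum_congr rfl fun d _ => by rw [sum_const_nat fun x hx => (mem_filter.1 hx).2, mul_comm]

theorem one_le_card_level_eq (htree : ∀ x y z : α, x ⋖ y → x ⋖ z → y = z) {m : α} {d : ℕ}
    (hd : d ∈ Icc 1 (level m)) : 1 ≤ #{x : α | level x = d} := by
  obtain ⟨t, -, ht⟩ := exists_le_level_eq htree hd
  exact card_pos.2 ⟨t, by simp [ht]⟩

theorem le_iff_of_card_level_eq_one (htree : ∀ x y z : α, x ⋖ y → x ⋖ z → y = z) {r : ℕ}
    (hlevel : ∀ x : α, level x ∈ Icc 1 r) (hfiber : ∀ d ∈ Ico 1 r, #{x : α | level x = d} = 1)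
    {x y : α} : x ≤ y ↔ x = y ∨ (level y < r ∧ level y ≤ level x) := by
  refine ⟨fun hxy => ?_, ?_⟩
  · rcases hxy.eq_or_lt with rfl | hxy
    · exact .inl rfl
    · have hlt := level_strictAnti hxy
      have hxr := (mem_Icc.1 (hlevel x)).2
      exact .inr ⟨by omega, hlt.le⟩
  · rintro (rfl | ⟨hyr, hyx⟩)
    · exact le_rfl
    obtain ⟨t, hxt, ht⟩ := exists_le_level_eq htree (mem_Icc.2 ⟨one_le_level y, hyx⟩)
    have hd : level y ∈ Ico 1 r := mem_Ico.2 ⟨one_le_level y, hyr⟩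
    have hty := card_le_one.1 (hfiber _ hd).le t (by simp [ht]) y (by simp)
    exact hty ▸ hxt

end Level

theorem card_eq_sub_one_add_card_fiber {β : Type*} [Fintype β] {r : ℕ} (hr : 0 < r) (f : β → ℕ)
    (hf : ∀ x, f x ∈ Icc 1 r) (hfiber : ∀ c ∈ Ico 1 r, #{x | f x = c} = 1) :
    Fintype.card β = (r - 1) + #{x | f x = r} := by
  rw [← card_univ, card_eq_sum_card_fiberwise fun x _ => hf x, ← Ico_insert_right hr,
    sum_insert (by simp), sum_congr rfl hfiber, sum_const, Nat.card_Ico, smul_eq_mul, mul_one,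
    add_comm]

theorem exists_equiv_comp_eq_of_card_fiber_eq_one {β γ : Type*} [Fintype β] [Fintype γ] {r : ℕ}
    (hcard : Fintype.card β = Fintype.card γ) (f : β → ℕ) (g : γ → ℕ)
    (hf : ∀ x, f x ∈ Icc 1 r) (hg : ∀ y, g y ∈ Icc 1 r)
    (hf1 : ∀ c ∈ Ico 1 r, #{x | f x = c} = 1) (hg1 : ∀ c ∈ Ico 1 r, #{y | g y = c} = 1) :
    ∃ e : β ≃ γ, ∀ x, g (e x) = f x := by
  have hfiber : ∀ c, #{x | f x = c} = #{y | g y = c} := by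
    intro c
    by_cases hc : c ∈ Ico 1 r
    · rw [hf1 c hc, hg1 c hc]
    by_cases hc' : c ∈ Icc 1 r
    · obtain rfl : c = r := by simp only [mem_Ico, mem_Icc] at hc hc'; omega
      have hr : 0 < c := (mem_Icc.1 hc').1
      have hβ := card_eq_sub_one_add_card_fiber hr f hf hf1
      have hγ := card_eq_sub_one_add_card_fiber hr g hg hg1
      omega
    · rw [filter_false_of_mem fun x _ (h : f x = c) => hc' (h ▸ hf x),
        filter_false_of_mem fun y _ (h : g y = c) => hc' (h ▸ hg y), card_empty, card_empty]
  exact ⟨Equiv.ofFiberEquiv fun c =>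
    Fintype.equivOfCardEq (by simpa [Fintype.card_subtype] using hfiber c),
    Equiv.ofFiberEquiv_map _⟩

def Hlevel (r i : ℕ) : ℕ := if i < r then r - i else r

theorem Hle_iff {n r : ℕ} {i j : Fin n} :
    Hle r i j ↔ i = j ∨ (Hlevel r j < r ∧ Hlevel r j ≤ Hlevel r i) := by
  unfold Hle Hlevel
  rw [Fin.ext_iff]
  split_ifs <;> omega

theorem Hlevel_mem_Icc {r : ℕ} (hr : 0 < r) (i : ℕ) : Hlevel r i ∈ Icc 1 r := by
  unfold Hlevel
  split_ifs <;> simp only [mem_Icc] <;> omega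

theorem card_Hlevel_eq_one {n r c : ℕ} (hrn : r ≤ n) (hc : c ∈ Ico 1 r) :
    #{i : Fin n | Hlevel r i = c} = 1 := by
  rw [mem_Ico] at hc
  refine card_eq_one.2 ⟨⟨r - c, by omega⟩, ext fun i => ?_⟩
  simp only [mem_filter, mem_univ, true_and, mem_singleton, Fin.ext_iff]
  unfold Hlevel
  split_ifs <;> omega

theorem card_Hle {n r : ℕ} (hr : 0 < r) (hrn : r ≤ n) (i : Fin n) :
    #{j | Hle r i j} = Hlevel r i := by
  have hi := i.isLt
  unfold Hlevel
  split_ifs with hir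
  · rw [show ({j | Hle r i j} : Finset (Fin n)) = Icc i ⟨r - 1, by omega⟩ by
        ext j
        simp only [mem_filter, mem_univ, true_and, mem_Icc, Hle, Fin.ext_iff, Fin.le_def]
        omega,
      Fin.card_Icc]
    dsimp only
    omega
  · rw [show ({j | Hle r i j} : Finset (Fin n)) =
          insert i (Icc ⟨1, by omega⟩ ⟨r - 1, by omega⟩) by
        ext j
        simp only [mem_filter, mem_univ, true_and, mem_insert, mem_Icc, Hle, Fin.ext_iff,
          Fin.le_def]
        omega,
      card_insert_of_notMem (by simp only [mem_Icc, Fin.le_def]; omega), Fin.card_Icc]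
    dsimp only
    omega

theorem card_level_eq_one_iff_exists_equiv_Hle {α : Type*} [Fintype α] [PartialOrder α]
    (htree : ∀ x y z : α, x ⋖ y → x ⋖ z → y = z) {n r : ℕ} (hcard : Fintype.card α = n)
    (hr : 0 < r) (hrn : r ≤ n) (hlevel : ∀ x : α, level x ∈ Icc 1 r) :
    (∀ d ∈ Ico 1 r, #{x : α | level x = d} = 1) ↔
      ∃ e : α ≃ Fin n, ∀ x y : α, x ≤ y ↔ Hle r (e x) (e y) := by
  constructor
  · intro hfiber
    obtain ⟨e, he⟩ := exists_equiv_comp_eq_of_card_fiber_eq_one (by simp [hcard]) level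
      (fun i : Fin n => Hlevel r i) hlevel (fun i => Hlevel_mem_Icc hr i) hfiber
      (fun c hc => card_Hlevel_eq_one hrn hc)
    refine ⟨e, fun x y => ?_⟩
    rw [le_iff_of_card_level_eq_one htree hlevel hfiber, Hle_iff, he, he, e.injective.eq_iff]
  · rintro ⟨e, he⟩ d hd
    have hlevel_e : ∀ x, level x = Hlevel r (e x) := fun x => by
      rw [← card_Hle hr hrn]
      exact card_equiv e (by simp [he x])
    rw [← card_Hlevel_eq_one hrn hd]
    exact card_equiv e (by simp [hlevel_e])

theorem stmt14_general {α : Type*} [Fintype α] [PartialOrder α]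
    (n r : ℕ) (hcard : Fintype.card α = n) (hr1 : 1 < r) (hrn : r ≤ n)
    (htree : ∀ x y z : α, x ⋖ y → x ⋖ z → y = z)
    (hrank : (∃ c : Finset α, IsChain (· ≤ ·) (c : Set α) ∧ c.card = r) ∧
      ∀ c : Finset α, IsChain (· ≤ ·) (c : Set α) → c.card ≤ r) :
    ((∑ u : α, (Finset.univ.filter (fun v => v ≤ u)).card) ≤ ∑ k ∈ Finset.Icc (n - r + 1) n, k) ∧
    (((∑ u : α, (Finset.univ.filter (fun v => v ≤ u)).card) = ∑ k ∈ Finset.Icc (n - r + 1) n, k) ↔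
      ∃ e : α ≃ Fin n, ∀ x y : α, x ≤ y ↔ Hle r (e x) (e y)) ∧
    ((∑ u : α, (Finset.univ.filter (fun v => v ≤ u)).card) + (n - r + 1).choose 2 ≤
      ∑ k ∈ Finset.Icc 1 n, k) := by
  obtain ⟨⟨c, hc, hcr⟩, hchain⟩ := hrank
  have hlevel : ∀ x : α, level x ∈ Icc 1 r :=
    fun x => mem_Icc.2 ⟨one_le_level x, level_le_of_isChain_card_le htree hchain x⟩
  obtain ⟨m, hm⟩ : ∃ m : α, level m = r := by
    obtain ⟨m, hcm⟩ := exists_card_le_level hc (card_pos.1 (by omega))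
    exact ⟨m, le_antisymm (mem_Icc.1 (hlevel m)).2 (hcr ▸ hcm)⟩
  have hfiber_pos : ∀ d ∈ Icc 1 r, 1 ≤ #{x : α | level x = d} :=
    fun d hd => one_le_card_level_eq htree (hm ▸ hd)
  have hfiber_sum : ∑ d ∈ Icc 1 r, #{x : α | level x = d} = n := by
    rw [← hcard, ← card_univ, card_eq_sum_card_fiberwise fun x _ => hlevel x]
  have key := sum_mul_add_sum_sub_mul_eq _ hfiber_pos hfiber_sum
  rw [sum_card_filter_le_eq_sum_level, sum_level_eq_sum_mul_card hlevel]
  refine ⟨key ▸ Nat.le_add_right _ _, ?_, ?_⟩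
  · rw [← key, left_eq_add, sum_sub_mul_eq_zero_iff _ hfiber_pos]
    exact card_level_eq_one_iff_exists_equiv_Hle htree hcard (by omega) hrn hlevel
  · have hsplit := sum_Icc_id_add_choose_two (Nat.sub_le n r)
    have htotal : ∑ k ∈ Icc 1 n, k = (n + 1).choose 2 := by
      simpa using sum_Icc_id_add_choose_two (Nat.zero_le n)
    omega

/-- Among all rooted trees (posets with every element covered by at most one element and a
greatest element) with `n` elements and rank `r` (maximum chain size), `1 < r ≤ n`, the sum of the
hook lengths `h_u = #{t : t ≤ u}` is at most `Σ_{k=n-r+1}^n k`, with equality iff the tree is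
isomorphic to `H_{n,r}`; consequently `Σ_{k=1}^n k − Σ_u h_u ≥ C(n−r+1, 2)`. -/
theorem stmt14 {α : Type*} [Fintype α] [PartialOrder α]
    (n r : ℕ) (hcard : Fintype.card α = n) (hr1 : 1 < r) (hrn : r ≤ n)
    (htree : ∀ x y z : α, x ⋖ y → x ⋖ z → y = z)
    (hroot : ∃ mx : α, ∀ x, x ≤ mx)
    (hrank : (∃ c : Finset α, IsChain (· ≤ ·) (c : Set α) ∧ c.card = r) ∧
      ∀ c : Finset α, IsChain (· ≤ ·) (c : Set α) → c.card ≤ r) :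
    ((∑ u : α, (Finset.univ.filter (fun v => v ≤ u)).card) ≤ ∑ k ∈ Finset.Icc (n - r + 1) n, k) ∧
    (((∑ u : α, (Finset.univ.filter (fun v => v ≤ u)).card) = ∑ k ∈ Finset.Icc (n - r + 1) n, k) ↔
      ∃ e : α ≃ Fin n, ∀ x y : α, x ≤ y ↔ Hle r (e x) (e y)) ∧
    ((∑ u : α, (Finset.univ.filter (fun v => v ≤ u)).card) + (n - r + 1).choose 2 ≤
      ∑ k ∈ Finset.Icc 1 n, k) :=
  stmt14_general n r hcard hr1 hrn htree hrank
end
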